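/- Let N ≥ 1 and let A ⊆ K_N = {k ∈ ℤ³ : k ≠ 0, |k|_∞ ≤ N} be a set satisfying: (i) (1,0,0), (0,1,0), (0,0,1) ∈ A; (ii) if m ∈ A then −m ∈ A (when −m ∈ K_N); (iii) if m, n ∈ A are linearly independent with |m| ≠ |n| and m + n ∈ K_N, then m + n ∈ A; (iv) if m, n ∈ A with |m| = |n| and m + n ∈ K_N, then m + n ∈ A. Then A = K_N. -/

import Mathlib

/-!
Induct on the ℓ¹ norm. If `k i ≠ 0` and `s = sign (k i)`, then `k = m + s eᵢ` with `m` of smaller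
ℓ¹ norm. Whenever `m` has another nonzero coordinate, `m` and `eᵢ` are linearly independent, and
(iii) and (iv) together say that an independent sum stays in `A` whatever the norms are. The axis
modes `c eᵢ` are reached by a detour through a second axis `eⱼ`:
`(c - s) eᵢ → (c - s) eᵢ + eⱼ → c eᵢ + eⱼ → c eᵢ`, each step adding an independent unit vector.
-/

open Finset

def KN (N : ℕ) : Set (Fin 3 → ℤ) :=
  {k | k ≠ 0 ∧ max (|k 0|) (max (|k 1|) (|k 2|)) ≤ (N : ℤ)}

/-- Embed an integer vector in ℝ³. -/
noncomputable def toReal3 (m : Fin 3 → ℤ) : Fin 3 → ℝ := fun i => (m i : ℝ)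

theorem LinearIndependent.pair_of_mul_sub_mul_ne_zero {K ι : Type*} [Field K] {v w : ι → K}
    (i j : ι) (h : v i * w j - v j * w i ≠ 0) : LinearIndependent K ![v, w] := by
  refine LinearIndependent.pair_iff.mpr fun s t hst => ?_
  have hi := congrFun hst i
  have hj := congrFun hst j
  simp only [Pi.add_apply, Pi.smul_apply, smul_eq_mul, Pi.zero_apply] at hi hj
  constructor
  · exact (mul_eq_zero.mp (by linear_combination w j * hi - w i * hj :
      s * (v i * w j - v j * w i) = 0)).resolve_right h
  · exact (mul_eq_zero.mp (by linear_combination v i * hj - v j * hi :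
      t * (v i * w j - v j * w i) = 0)).resolve_right h

theorem Int.natAbs_sub_sign_lt {x : ℤ} (hx : x ≠ 0) : (x - x.sign).natAbs < x.natAbs := by
  rcases hx.lt_or_gt with h | h
  · rw [Int.sign_eq_neg_one_of_neg h]; omega
  · rw [Int.sign_eq_one_of_pos h]; omega

theorem Int.isUnit_sign {x : ℤ} (hx : x ≠ 0) : IsUnit x.sign := by
  rcases hx.lt_or_gt with h | h
  · simp [Int.sign_eq_neg_one_of_neg h]
  · simp [Int.sign_eq_one_of_pos h]

section Box

variable {ι : Type*} {N : ℕ}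

def nonzeroCube (N : ℕ) : Set (ι → ℤ) := {k | k ≠ 0 ∧ ∀ i, |k i| ≤ N}

theorem neg_mem_nonzeroCube {k : ι → ℤ} : -k ∈ nonzeroCube N ↔ k ∈ nonzeroCube N := by
  simp [nonzeroCube]

theorem mem_nonzeroCube_of_natAbs_le {k m : ι → ℤ} (hk : k ∈ nonzeroCube N) (hm : m ≠ 0)
    (hmk : ∀ l, (m l).natAbs ≤ (k l).natAbs) : m ∈ nonzeroCube N := by
  refine ⟨hm, fun l => ?_⟩
  have := hk.2 l
  rw [Int.abs_eq_natAbs] at this ⊢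
  exact le_trans (by exact_mod_cast hmk l) this

variable [DecidableEq ι]

theorem single_mem_nonzeroCube {i : ι} {a : ℤ} (ha : a ≠ 0) (haN : |a| ≤ N) :
    Pi.single i a ∈ nonzeroCube N := by
  refine ⟨by simpa using ha, fun l => ?_⟩
  rcases eq_or_ne l i with rfl | hl <;> simp [*]

theorem single_add_single_mem_nonzeroCube {i j : ι} (hij : i ≠ j) {a b : ℤ} (hb : b ≠ 0)
    (haN : |a| ≤ N) (hbN : |b| ≤ N) : Pi.single i a + Pi.single j b ∈ nonzeroCube N := by
  refine ⟨fun h => hb (by simpa [hij.symm] using congrFun h j), fun l => ?_⟩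
  rcases eq_or_ne l i with rfl | hl
  · simpa [hij] using haN
  rcases eq_or_ne l j with rfl | hl'
  · simpa [hl] using hbN
  · simp [hl, hl']

theorem natAbs_sub_single_sign_le (k : ι → ℤ) (i l : ι) :
    ((k - Pi.single i (k i).sign : ι → ℤ) l).natAbs ≤ (k l).natAbs := by
  rcases eq_or_ne l i with rfl | hl
  · rcases eq_or_ne (k l) 0 with h | h
    · simp [h]
    · simpa using (Int.natAbs_sub_sign_lt h).le
  · simp [hl]

variable [Fintype ι]

theorem natAbs_sum_sub_single_sign_lt {k : ι → ℤ} {i : ι} (hi : k i ≠ 0) :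
    ∑ l, ((k - Pi.single i (k i).sign : ι → ℤ) l).natAbs < ∑ l, (k l).natAbs :=
  Finset.sum_lt_sum (fun l _ => natAbs_sub_single_sign_le k i l)
    ⟨i, mem_univ i, by simpa using Int.natAbs_sub_sign_lt hi⟩

end Box

section Generation

variable {ι : Type*} [DecidableEq ι] {N : ℕ} {A : Set (ι → ℤ)}

def IndepAddClosed (N : ℕ) (A : Set (ι → ℤ)) : Prop :=
  ∀ m ∈ A, ∀ n ∈ A, ∀ i j, m i * n j - m j * n i ≠ 0 → m + n ∈ nonzeroCube N → m + n ∈ A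

theorem single_add_unit_mem_of_single_mem (hunit : ∀ i (s : ℤ), IsUnit s → Pi.single i s ∈ A)
    (hadd : IndepAddClosed N A)
    {i j : ι} (hij : i ≠ j) {a s : ℤ} (hs : IsUnit s) (ha : a ≠ 0) (has : a + s ≠ 0)
    (haN : |a| ≤ N) (hasN : |a + s| ≤ N) (hA : Pi.single i a ∈ A) :
    Pi.single i (a + s) ∈ A := by
  have h1N : |(1 : ℤ)| ≤ N := by rw [abs_one]; exact (Int.one_le_abs ha).trans haN
  have hleave : Pi.single i a + Pi.single j 1 ∈ A :=
    hadd _ hA _ (hunit j 1 isUnit_one) i j (by simp [hij, ha])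
      (single_add_single_mem_nonzeroCube hij one_ne_zero haN h1N)
  have hadvance : Pi.single i (a + s) + Pi.single j 1 ∈ A := by
    have := hadd _ hleave _ (hunit i s hs) j i (by simp [hij, hs.ne_zero]) (by
      rw [add_right_comm, ← Pi.single_add]
      exact single_add_single_mem_nonzeroCube hij one_ne_zero hasN h1N)
    rwa [add_right_comm, ← Pi.single_add] at this
  have := hadd _ hadvance _ (hunit j (-1) isUnit_one.neg) i j (by simp [hij]; omega)
    (by rw [add_assoc, ← Pi.single_add]; simpa using single_mem_nonzeroCube has hasN)
  simpa [add_assoc, ← Pi.single_add] using this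

theorem nonzeroCube_subset_of_indepAddClosed [Fintype ι] [Nontrivial ι]
    (hunit : ∀ i (s : ℤ), IsUnit s → Pi.single i s ∈ A)
    (hadd : IndepAddClosed N A) :
    nonzeroCube N ⊆ A := by
  intro k hk
  induction hn : ∑ l, (k l).natAbs using Nat.strong_induction_on generalizing k with
  | _ n ih =>
  subst hn
  obtain ⟨i, hi⟩ := Function.ne_iff.mp hk.1
  set s := (k i).sign
  have hs : IsUnit s := Int.isUnit_sign hi
  by_cases hm0 : k - Pi.single i s = 0
  · rw [← sub_add_cancel k (Pi.single i s), hm0, zero_add]; exact hunit i s hs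
  have hmN : k - Pi.single i s ∈ nonzeroCube N :=
    mem_nonzeroCube_of_natAbs_le hk hm0 (natAbs_sub_single_sign_le k i)
  have hm : k - Pi.single i s ∈ A := ih _ (natAbs_sum_sub_single_sign_lt hi) hmN rfl
  by_cases hj : ∃ j ≠ i, k j ≠ 0
  · obtain ⟨j, hji, hkj⟩ := hj
    simpa using
      hadd _ hm _ (hunit i s hs) j i (by simp [hji, hkj, hs.ne_zero]) (by simpa using hk)
  · push Not at hj
    have hk_eq : k = Pi.single i (k i) := funext fun l => by
      rcases eq_or_ne l i with rfl | hl
      · simp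
      · simp [hl, hj l hl]
    obtain ⟨j, hji⟩ := exists_ne i
    have ha : k i - s ≠ 0 := fun h => hm0 (by rw [hk_eq, ← Pi.single_sub, h, Pi.single_zero])
    have haN : |k i - s| ≤ N := by simpa using hmN.2 i
    have hm' : Pi.single i (k i - s) ∈ A := by rwa [Pi.single_sub, ← hk_eq]
    simpa [← hk_eq] using single_add_unit_mem_of_single_mem hunit hadd hji.symm hs ha
      (by simpa using hi) haN (by simpa using hk.2 i) hm'

end Generation

theorem KN_eq_nonzeroCube (N : ℕ) : KN N = nonzeroCube N := by
  ext k; simp [KN, nonzeroCube, Fin.forall_fin_succ]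

theorem generate_all_modes_general (N : ℕ) (A : Set (Fin 3 → ℤ))
    (hsub : A ⊆ KN N)
    (h1 : (fun i => if i = 0 then 1 else 0) ∈ A)
    (h2 : (fun i => if i = 1 then 1 else 0) ∈ A)
    (h3 : (fun i => if i = 2 then 1 else 0) ∈ A)
    (hneg : ∀ m ∈ A, -m ∈ KN N → -m ∈ A)
    (hindep : ∀ m ∈ A, ∀ n ∈ A,
      LinearIndependent ℝ ![toReal3 m, toReal3 n] →
      (∑ i, (m i) ^ 2) ≠ (∑ i, (n i) ^ 2) → m + n ∈ KN N → m + n ∈ A)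
    (heq : ∀ m ∈ A, ∀ n ∈ A,
      (∑ i, (m i) ^ 2) = (∑ i, (n i) ^ 2) → m + n ∈ KN N → m + n ∈ A) :
    A = KN N := by
  rw [KN_eq_nonzeroCube] at hsub hneg hindep heq ⊢
  have hbasis : ∀ i : Fin 3, Pi.single i 1 ∈ A := by
    intro i
    rw [show (Pi.single i 1 : Fin 3 → ℤ) = fun l => if l = i then 1 else 0 from
      funext (Pi.single_apply i 1)]
    fin_cases i
    exacts [h1, h2, h3]
  have hunit : ∀ i (s : ℤ), IsUnit s → Pi.single i s ∈ A := by
    rintro i s hs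
    rcases Int.isUnit_iff.mp hs with rfl | rfl
    · exact hbasis i
    · rw [Pi.single_neg]
      exact hneg _ (hbasis i) (neg_mem_nonzeroCube.mpr (hsub (hbasis i)))
  have hadd : IndepAddClosed N A := by
    intro m hm n hn i j hdet hmn
    by_cases hnorm : ∑ i, m i ^ 2 = ∑ i, n i ^ 2
    · exact heq m hm n hn hnorm hmn
    · refine hindep m hm n hn (.pair_of_mul_sub_mul_ne_zero i j ?_) hnorm hmn
      simpa [toReal3] using (by exact_mod_cast hdet : ((m i * n j - m j * n i : ℤ) : ℝ) ≠ 0)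
  exact hsub.antisymm (nonzeroCube_subset_of_indepAddClosed hunit hadd)

theorem generate_all_modes (N : ℕ) (hN : 1 ≤ N) (A : Set (Fin 3 → ℤ))
    (hsub : A ⊆ KN N)
    (h1 : (fun i => if i = 0 then 1 else 0) ∈ A)
    (h2 : (fun i => if i = 1 then 1 else 0) ∈ A)
    (h3 : (fun i => if i = 2 then 1 else 0) ∈ A)
    (hneg : ∀ m ∈ A, -m ∈ KN N → -m ∈ A)
    (hindep : ∀ m ∈ A, ∀ n ∈ A,
      LinearIndependent ℝ ![toReal3 m, toReal3 n] →
      (∑ i, (m i) ^ 2) ≠ (∑ i, (n i) ^ 2) → m + n ∈ KN N → m + n ∈ A)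
    (heq : ∀ m ∈ A, ∀ n ∈ A,
      (∑ i, (m i) ^ 2) = (∑ i, (n i) ^ 2) → m + n ∈ KN N → m + n ∈ A) :
    A = KN N :=
  generate_all_modes_general N A hsub h1 h2 h3 hneg hindep heq
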